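/- arXiv:hep-th/0104079 — 6 statements merged into one kernel-verified Lean document; each statement's English description precedes it below -/
import Mathlib

section
/- Let b_{ij}(k) ∈ A (1 ≤ i,j ≤ N) be given for each real k, and let b₁(k) = b(k)⊗I and b₂(k) = I⊗b(k) denote the corresponding N²×N² matrices with entries in A. Then for fixed real k₁ ≠ ±k₂ the tensor exchange relation R(k₁−k₂)·b₁(k₁)·R(k₁+k₂)·b₂(k₂) = b₂(k₂)·R(k₁+k₂)·b₁(k₁)·R(k₁−k₂) holds (with the complex entries of R regarded as elements of A) if and only if for all indices i,j,k,l the commutator relation holds: [b_{ij}(k₁), b_{kl}(k₂)] = (ig/(k₁−k₂))(b_{kj}(k₂)b_{il}(k₁) − b_{kj}(k₁)b_{il}(k₂)) + (ig/(k₁+k₂))(δ_{il} Σ_a b_{ka}(k₂)b_{aj}(k₁) − δ_{kj} Σ_a b_{ia}(k₁)b_{al}(k₂)) − (g²/(k₁²−k₂²)) δ_{ij} Σ_a (b_{ka}(k₂)b_{al}(k₁) − b_{ka}(k₁)b_{al}(k₂)). -/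
open Matrix

/-- The flip (permutation) matrix `P = Σ_{i,j} E_{ij} ⊗ E_{ji}` on `ℂ^N ⊗ ℂ^N`. -/
noncomputable def flipMat (N : ℕ) : Matrix (Fin N × Fin N) (Fin N × Fin N) ℂ :=
  Matrix.of fun p q => if p.1 = q.2 ∧ p.2 = q.1 then 1 else 0

/-- The rational R-matrix `R(k) = (1/(k+ig)) (k · I⊗I + ig · P)` of the gl(N)-NLS model. -/
noncomputable def Rmat (N : ℕ) (g : ℝ) (k : ℝ) :
    Matrix (Fin N × Fin N) (Fin N × Fin N) ℂ :=
  ((k : ℂ) + Complex.I * (g : ℂ))⁻¹ •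
    ((k : ℂ) • (1 : Matrix (Fin N × Fin N) (Fin N × Fin N) ℂ)
      + (Complex.I * (g : ℂ)) • flipMat N)

/-- `b₁(k) = b(k) ⊗ I` as an N²×N² matrix with entries in the algebra `A`. -/
def bOne {N : ℕ} {A : Type*} [Ring A] (bk : Fin N → Fin N → A) :
    Matrix (Fin N × Fin N) (Fin N × Fin N) A :=
  Matrix.of fun p q => if p.2 = q.2 then bk p.1 q.1 else 0

/-- `b₂(k) = I ⊗ b(k)` as an N²×N² matrix with entries in the algebra `A`. -/
def bTwo {N : ℕ} {A : Type*} [Ring A] (bk : Fin N → Fin N → A) :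
    Matrix (Fin N × Fin N) (Fin N × Fin N) A :=
  Matrix.of fun p q => if p.1 = q.1 then bk p.2 q.2 else 0


section Helpers
set_option linter.unusedSectionVars false
variable {N : ℕ} {A : Type*} [Ring A] [Algebra ℂ A]

lemma pair_swap_eq {α : Type*} (x q : α × α) : (q = (x.2, x.1)) ↔ (x = (q.2, q.1)) := by
  constructor <;> rintro rfl <;> rfl
lemma flipA_apply (p q : Fin N × Fin N) :
    (algebraMap ℂ A) (flipMat N p q) = if p = (q.2, q.1) then 1 else 0 := by
  simp [flipMat, apply_ite (algebraMap ℂ A), Prod.ext_iff]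
lemma mul_flipA (M : Matrix (Fin N × Fin N) (Fin N × Fin N) A) :
    M * (flipMat N).map (algebraMap ℂ A) = Matrix.of fun p q => M p (q.2, q.1) := by
  ext p q
  simp [Matrix.mul_apply, flipA_apply, pair_swap_eq, mul_ite]
lemma flipA_mul (M : Matrix (Fin N × Fin N) (Fin N × Fin N) A) :
    (flipMat N).map (algebraMap ℂ A) * M = Matrix.of fun p q => M (p.2, p.1) q := by
  ext p q
  simp [Matrix.mul_apply, flipA_apply, pair_swap_eq, ite_mul]

lemma flipA_bOne (x : Fin N → Fin N → A) :
    (flipMat N).map (algebraMap ℂ A) * bOne x = bTwo x * (flipMat N).map (algebraMap ℂ A) := by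
  rw [flipA_mul, mul_flipA]; ext p q; simp [bOne, bTwo]
lemma flipA_bTwo (x : Fin N → Fin N → A) :
    (flipMat N).map (algebraMap ℂ A) * bTwo x = bOne x * (flipMat N).map (algebraMap ℂ A) := by
  rw [flipA_mul, mul_flipA]; ext p q; simp [bOne, bTwo]
lemma flipA_flipA :
    (flipMat N).map (algebraMap ℂ A) * (flipMat N).map (algebraMap ℂ A) = 1 := by
  rw [flipA_mul]; ext p q
  simp [flipA_apply, Matrix.one_apply, Prod.ext_iff, and_comm, eq_comm]

lemma Rmat_map (g : ℝ) (k : ℝ) :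
    (Rmat N g k).map (algebraMap ℂ A) =
      ((k : ℂ) + Complex.I * (g : ℂ))⁻¹ •
        ((k : ℂ) • (1 : Matrix (Fin N × Fin N) (Fin N × Fin N) A)
          + (Complex.I * (g : ℂ)) • (flipMat N).map (algebraMap ℂ A)) := by
  ext p q
  simp only [Rmat, Matrix.map_apply, Matrix.smul_apply, Matrix.add_apply, Matrix.one_apply,
    smul_eq_mul]
  simp [Algebra.smul_def, _root_.map_mul, map_add, apply_ite (algebraMap ℂ A), mul_add, mul_ite]

lemma oneMul_one (x y : Fin N → Fin N → A) :
    bOne x * bOne y = Matrix.of fun p q =>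
      if p.2 = q.2 then ∑ a, x p.1 a * y a q.1 else 0 := by
  ext p q
  simp [Matrix.mul_apply, bOne, Fintype.sum_prod_type, ite_mul, mul_ite, Finset.mul_sum]

lemma twoMul_two (x y : Fin N → Fin N → A) :
    bTwo x * bTwo y = Matrix.of fun p q =>
      if p.1 = q.1 then ∑ a, x p.2 a * y a q.2 else 0 := by
  ext p q
  simp [Matrix.mul_apply, bTwo, Fintype.sum_prod_type, ite_mul, mul_ite, Finset.mul_sum]

lemma oneMul_two (x y : Fin N → Fin N → A) :
    bOne x * bTwo y = Matrix.of fun p q => x p.1 q.1 * y p.2 q.2 := by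
  ext p q
  simp [Matrix.mul_apply, bOne, bTwo, Fintype.sum_prod_type, ite_mul, mul_ite]

lemma twoMul_one (x y : Fin N → Fin N → A) :
    bTwo y * bOne x = Matrix.of fun p q => y p.2 q.2 * x p.1 q.1 := by
  ext p q
  simp [Matrix.mul_apply, bOne, bTwo, Fintype.sum_prod_type, ite_mul, mul_ite]

lemma mul_flipA_flipA (X : Matrix (Fin N × Fin N) (Fin N × Fin N) A) :
    X * (flipMat N).map (algebraMap ℂ A) * (flipMat N).map (algebraMap ℂ A) = X := by
  rw [mul_assoc, flipA_flipA, mul_one]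
lemma mul_flipA_bOne (X : Matrix (Fin N × Fin N) (Fin N × Fin N) A) (x : Fin N → Fin N → A) :
    X * (flipMat N).map (algebraMap ℂ A) * bOne x = X * bTwo x * (flipMat N).map (algebraMap ℂ A) := by
  rw [mul_assoc, flipA_bOne, ← mul_assoc]
lemma mul_flipA_bTwo (X : Matrix (Fin N × Fin N) (Fin N × Fin N) A) (x : Fin N → Fin N → A) :
    X * (flipMat N).map (algebraMap ℂ A) * bTwo x = X * bOne x * (flipMat N).map (algebraMap ℂ A) := by
  rw [mul_assoc, flipA_bTwo, ← mul_assoc]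

lemma ite_sub_zero {A : Type*} [Ring A] {P : Prop} [Decidable P] (a b : A) :
    (if P then a - b else 0) = (if P then a else 0) - (if P then b else 0) := by
  split <;> simp

lemma smul_cancel_iff {M : Type*} [AddCommMonoid M] [Module ℂ M] {c : ℂ} (hc : c ≠ 0)
    {x y : M} : c • x = c • y ↔ x = y :=
  ⟨fun h => by simpa [inv_smul_smul₀ hc] using congrArg (fun z => c⁻¹ • z) h, fun h => by rw [h]⟩

end Helpers

/-- The tensor exchange relation
`R(k₁−k₂) b₁(k₁) R(k₁+k₂) b₂(k₂) = b₂(k₂) R(k₁+k₂) b₁(k₁) R(k₁−k₂)`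
holds iff the entrywise commutation relations of the S_R algebra hold. -/
theorem exchange_iff_commutation (N : ℕ) (hN : 1 ≤ N) (g : ℝ) (hg : 0 < g)
    (A : Type*) [Ring A] [Algebra ℂ A]
    (b : ℝ → Fin N → Fin N → A)
    (k₁ k₂ : ℝ) (h1 : k₁ ≠ k₂) (h2 : k₁ ≠ -k₂) :
    ((Rmat N g (k₁ - k₂)).map (algebraMap ℂ A) * bOne (b k₁) *
        (Rmat N g (k₁ + k₂)).map (algebraMap ℂ A) * bTwo (b k₂) =
      bTwo (b k₂) * (Rmat N g (k₁ + k₂)).map (algebraMap ℂ A) *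
        bOne (b k₁) * (Rmat N g (k₁ - k₂)).map (algebraMap ℂ A)) ↔
    (∀ i j k l : Fin N,
      b k₁ i j * b k₂ k l - b k₂ k l * b k₁ i j =
        ((Complex.I * (g : ℂ)) / ((k₁ : ℂ) - (k₂ : ℂ))) •
            (b k₂ k j * b k₁ i l - b k₁ k j * b k₂ i l)
        + ((Complex.I * (g : ℂ)) / ((k₁ : ℂ) + (k₂ : ℂ))) •
            ((if i = l then ∑ a : Fin N, b k₂ k a * b k₁ a j else 0)
              - (if k = j then ∑ a : Fin N, b k₁ i a * b k₂ a l else 0))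
        - (((g : ℂ) ^ 2) / ((k₁ : ℂ) ^ 2 - (k₂ : ℂ) ^ 2)) •
            (if i = j then
              ∑ a : Fin N, (b k₂ k a * b k₁ a l - b k₁ k a * b k₂ a l)
             else 0)) := by
  rw [Rmat_map, Rmat_map]
  push_cast
  simp only [smul_mul_assoc, mul_smul_comm]
  have him : ∀ r : ℝ, ((r : ℂ) + Complex.I * (g : ℂ)) ≠ 0 := by
    intro r h
    have := congrArg Complex.im h
    simp at this
    exact hg.ne' this
  have hu' : ((k₁ : ℂ) - ↑k₂ + Complex.I * ↑g) ≠ 0 := by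
    have := him (k₁ - k₂); push_cast at this; exact this
  have hv' : ((k₁ : ℂ) + ↑k₂ + Complex.I * ↑g) ≠ 0 := by
    have := him (k₁ + k₂); push_cast at this; exact this
  rw [smul_comm (((k₁:ℂ) + ↑k₂ + Complex.I * ↑g)⁻¹) (((k₁:ℂ) - ↑k₂ + Complex.I * ↑g)⁻¹)]
  rw [smul_cancel_iff (inv_ne_zero hu'), smul_cancel_iff (inv_ne_zero hv')]
  simp only [add_mul, mul_add, smul_mul_assoc, mul_smul_comm, smul_smul, one_mul, mul_one,
    flipA_bOne, flipA_bTwo, flipA_flipA, mul_flipA_flipA, mul_flipA_bOne, mul_flipA_bTwo,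
    ← mul_assoc]
  -- nonzero scalars
  have hu : ((k₁:ℂ) - ↑k₂) ≠ 0 := sub_ne_zero.mpr (by exact_mod_cast h1)
  have hv : ((k₁:ℂ) + ↑k₂) ≠ 0 := by
    intro h
    exact h2 (by exact_mod_cast eq_neg_of_add_eq_zero_left h)
  have huv : (((k₁:ℂ) - ↑k₂) * ((k₁:ℂ) + ↑k₂)) ≠ 0 := mul_ne_zero hu hv
  have e1 : (((k₁:ℂ) - ↑k₂) * ((k₁:ℂ) + ↑k₂)) * (Complex.I * ↑g / ((k₁:ℂ) - ↑k₂))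
      = Complex.I * ↑g * ((k₁:ℂ) + ↑k₂) := by field_simp
  have e2 : (((k₁:ℂ) - ↑k₂) * ((k₁:ℂ) + ↑k₂)) * (Complex.I * ↑g / ((k₁:ℂ) + ↑k₂))
      = Complex.I * ↑g * ((k₁:ℂ) - ↑k₂) := by field_simp
  have e3 : (((k₁:ℂ) - ↑k₂) * ((k₁:ℂ) + ↑k₂)) * ((↑g:ℂ) ^ 2 / ((↑k₁:ℂ) ^ 2 - (↑k₂:ℂ) ^ 2))
      = (↑g:ℂ) ^ 2 := by
    rw [show ((↑k₁:ℂ) ^ 2 - (↑k₂:ℂ) ^ 2) = ((k₁:ℂ) - ↑k₂) * ((k₁:ℂ) + ↑k₂) by ring]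
    field_simp
  conv_rhs =>
    ext i j k l
    rw [← smul_cancel_iff huv]
    simp only [smul_sub, smul_add, smul_smul]
    rw [e1, e2, e3]
  have hgg : (Complex.I * (↑g:ℂ)) * (Complex.I * ↑g) = -((↑g:ℂ) ^ 2) := by
    have h := Complex.I_mul_I
    calc (Complex.I * (↑g:ℂ)) * (Complex.I * ↑g)
        = Complex.I * Complex.I * ((↑g:ℂ) * ↑g) := by ring
      _ = -((↑g:ℂ) ^ 2) := by rw [h]; ring
  simp only [oneMul_two, twoMul_one, oneMul_one, twoMul_two, mul_flipA]
  rw [← Matrix.ext_iff]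
  simp only [Finset.sum_sub_distrib, ite_sub_zero]
  constructor
  · intro h i j k l
    have H := h (i, k) (j, l)
    simp only [Matrix.add_apply, Matrix.smul_apply, Matrix.of_apply, smul_add, smul_smul,
      hgg] at H
    linear_combination (norm := module) H
  · intro h p q
    obtain ⟨i, k⟩ := p
    obtain ⟨j, l⟩ := q
    have H := h i j k l
    simp only [Matrix.add_apply, Matrix.smul_apply, Matrix.of_apply, smul_add, smul_smul, hgg]
    linear_combination (norm := module) H
end

section
/- Let B : ℝ → M_N(ℂ) be a matrix-valued function. Then for all real k₁ ≠ ±k₂ the boundary Yang–Baxter equation R(k₁−k₂)·B₁(k₁)·R(k₁+k₂)·B₂(k₂) = B₂(k₂)·R(k₁+k₂)·B₁(k₁)·R(k₁−k₂) holds (where B₁(k) = B(k)⊗I and B₂(k) = I⊗B(k)) if and only if both of the following hold for all real k₁ ≠ ±k₂: (i) [B(k₁), B(k₂)] = 0, and (ii) (B(k₁)B(k₂))⊗I − I⊗(B(k₂)B(k₁)) = ((k₁+k₂)/(k₁−k₂))·(B(k₁)⊗B(k₂) − B(k₂)⊗B(k₁)). -/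
open Matrix Kronecker

/-!
Clearing the scalar prefactors of the R-matrices and using `P (A ⊗ B) = (B ⊗ A) P` and `P² = 1`,
the boundary Yang–Baxter equation at `(k₁, k₂)` becomes the vanishing of a defect that is linear
in `u = k₁ - k₂`, `v = k₁ + k₂` and `b = ig`. Its sum with the defect at the swapped pair
`(k₂, k₁)` is `u (C ⊗ 1 + 1 ⊗ C) P` with `C = [B(k₁), B(k₂)]`, which forces `C = 0`; the
`b`-term then drops out and what is left is `u` times (ii), multiplied by the invertible `P`.
-/

namespace Matrix

theorem sub_kronecker {l m n p α : Type*} [NonUnitalNonAssocRing α] (A₁ A₂ : Matrix l m α)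
    (B : Matrix n p α) : (A₁ - A₂) ⊗ₖ B = A₁ ⊗ₖ B - A₂ ⊗ₖ B := by
  ext; simp [sub_mul]

theorem kronecker_sub {l m n p α : Type*} [NonUnitalNonAssocRing α] (A : Matrix l m α)
    (B₁ B₂ : Matrix n p α) : A ⊗ₖ (B₁ - B₂) = A ⊗ₖ B₁ - A ⊗ₖ B₂ := by
  ext; simp [mul_sub]

theorem kronecker_mul_kronecker_assoc {l m n p q r o α : Type*} [Fintype m] [Fintype n]
    [Fintype p] [Fintype q] [Fintype r] [CommSemiring α] (A : Matrix l m α) (B : Matrix n p α)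
    (C : Matrix m q α) (D : Matrix p r α) (M : Matrix (q × r) o α) :
    (A ⊗ₖ B) * ((C ⊗ₖ D) * M) = ((A * C) ⊗ₖ (B * D)) * M := by
  rw [← Matrix.mul_assoc, mul_kronecker_mul]

theorem eq_zero_of_kronecker_one_add_one_kronecker_eq_zero {n R : Type*} [Fintype n]
    [DecidableEq n] [Ring R] [NoZeroDivisors R] [CharZero R] {C : Matrix n n R}
    (h : C ⊗ₖ (1 : Matrix n n R) + (1 : Matrix n n R) ⊗ₖ C = 0) : C = 0 := by
  ext i j
  have hij := congrFun (congrFun h (i, j)) (j, j)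
  by_cases hij' : i = j
  · subst hij'
    simpa using hij
  · simpa [one_apply, hij'] using hij

end Matrix

section Flip

variable {N : ℕ}

theorem flipMat_mul_self : flipMat N * flipMat N = 1 := by
  ext ⟨a, b⟩ ⟨c, d⟩
  simp [flipMat, mul_apply, Fintype.sum_prod_type, one_apply, Prod.ext_iff, ite_and, eq_comm]

theorem flipMat_mul_kronecker (A B : Matrix (Fin N) (Fin N) ℂ) :
    flipMat N * (A ⊗ₖ B) = (B ⊗ₖ A) * flipMat N := by
  ext ⟨a, b⟩ ⟨c, d⟩
  simp [flipMat, mul_apply, Fintype.sum_prod_type, ite_and, mul_comm]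

theorem mul_flipMat_eq_zero_iff {M : Matrix (Fin N × Fin N) (Fin N × Fin N) ℂ} :
    M * flipMat N = 0 ↔ M = 0 := by
  refine ⟨fun h => ?_, fun h => by rw [h, zero_mul]⟩
  simpa [mul_assoc, flipMat_mul_self] using congrArg (· * flipMat N) h

end Flip

section ReflectionDefect

variable {N : ℕ}

/-- For `u = k₁ - k₂`, `v = k₁ + k₂`, `b = ig`, the difference of the two sides of the boundary
Yang–Baxter equation, multiplied by `(u + b)(v + b) / b`. -/
noncomputable def reflectionDefect (u v b : ℂ) (X Y : Matrix (Fin N) (Fin N) ℂ) :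
    Matrix (Fin N × Fin N) (Fin N × Fin N) ℂ :=
  (u • ((X * Y) ⊗ₖ 1 - 1 ⊗ₖ (Y * X)) - v • (X ⊗ₖ Y - Y ⊗ₖ X)) * flipMat N
    + b • (1 ⊗ₖ (X * Y - Y * X))

theorem boundaryYBE_sub_eq_smul_reflectionDefect (u v b : ℂ) (X Y : Matrix (Fin N) (Fin N) ℂ) :
    (u • 1 + b • flipMat N) * (X ⊗ₖ 1) * (v • 1 + b • flipMat N) * (1 ⊗ₖ Y)
      - (1 ⊗ₖ Y) * (v • 1 + b • flipMat N) * (X ⊗ₖ 1) * (u • 1 + b • flipMat N)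
    = b • reflectionDefect u v b X Y := by
  simp only [reflectionDefect, add_mul, mul_add, smul_mul_assoc, mul_smul_comm, one_mul, mul_one,
    mul_assoc, kronecker_mul_kronecker_assoc, ← mul_kronecker_mul, flipMat_mul_kronecker,
    flipMat_mul_self, sub_mul, kronecker_sub]
  module

theorem boundaryYBE_iff_reflectionDefect_eq_zero {g : ℝ} (hg : g ≠ 0)
    (X Y : Matrix (Fin N) (Fin N) ℂ) (k₁ k₂ : ℝ) :
    Rmat N g (k₁ - k₂) * (X ⊗ₖ 1) * Rmat N g (k₁ + k₂) * (1 ⊗ₖ Y) =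
        (1 ⊗ₖ Y) * Rmat N g (k₁ + k₂) * (X ⊗ₖ 1) * Rmat N g (k₁ - k₂) ↔
      reflectionDefect ((k₁ : ℂ) - k₂) ((k₁ : ℂ) + k₂) (Complex.I * g) X Y = 0 := by
  have hc (k : ℝ) : (k : ℂ) + Complex.I * g ≠ 0 := fun h =>
    hg (by simpa using congrArg Complex.im h)
  have hb : Complex.I * g ≠ 0 := mul_ne_zero Complex.I_ne_zero (Complex.ofReal_ne_zero.2 hg)
  simp only [Rmat, smul_mul_assoc, mul_smul_comm, smul_smul]
  rw [mul_comm ((((k₁ + k₂ : ℝ) : ℂ) + Complex.I * g)⁻¹),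
    smul_right_inj (mul_ne_zero (inv_ne_zero (hc _)) (inv_ne_zero (hc _))), ← sub_eq_zero,
    boundaryYBE_sub_eq_smul_reflectionDefect, smul_eq_zero, or_iff_right hb]
  norm_cast

theorem reflectionDefect_add_swap (u v b : ℂ) (X Y : Matrix (Fin N) (Fin N) ℂ) :
    reflectionDefect u v b X Y + reflectionDefect (-u) v b Y X =
      u • (((X * Y - Y * X) ⊗ₖ 1 + 1 ⊗ₖ (X * Y - Y * X)) * flipMat N) := by
  simp only [reflectionDefect, sub_kronecker, kronecker_sub, smul_mul_assoc, add_mul, sub_mul]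
  module

theorem commutator_eq_zero_of_reflectionDefect_eq_zero {u v b : ℂ}
    {X Y : Matrix (Fin N) (Fin N) ℂ} (hu : u ≠ 0) (h₁ : reflectionDefect u v b X Y = 0)
    (h₂ : reflectionDefect (-u) v b Y X = 0) : X * Y - Y * X = 0 := by
  have h := reflectionDefect_add_swap u v b X Y
  rw [h₁, h₂, add_zero, eq_comm, smul_eq_zero, or_iff_right hu,
    mul_flipMat_eq_zero_iff] at h
  exact eq_zero_of_kronecker_one_add_one_kronecker_eq_zero h

theorem reflectionDefect_eq_zero_iff_of_commute {u v b : ℂ}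
    {X Y : Matrix (Fin N) (Fin N) ℂ} (hu : u ≠ 0) (h : Commute X Y) :
    reflectionDefect u v b X Y = 0 ↔
      (X * Y) ⊗ₖ 1 - 1 ⊗ₖ (Y * X) = (v / u) • (X ⊗ₖ Y - Y ⊗ₖ X) := by
  rw [reflectionDefect, h.eq, sub_self, kronecker_zero, smul_zero, add_zero,
    mul_flipMat_eq_zero_iff, sub_eq_zero, div_eq_inv_mul, mul_smul, eq_inv_smul_iff₀ hu]

end ReflectionDefect

theorem boundary_YBE_iff_general (N : ℕ) (g : ℝ) (hg : 0 < g)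
    (B : ℝ → Matrix (Fin N) (Fin N) ℂ) :
    (∀ k₁ k₂ : ℝ, k₁ ≠ k₂ → k₁ ≠ -k₂ →
      Rmat N g (k₁ - k₂) * (B k₁ ⊗ₖ (1 : Matrix (Fin N) (Fin N) ℂ)) *
          Rmat N g (k₁ + k₂) * ((1 : Matrix (Fin N) (Fin N) ℂ) ⊗ₖ B k₂) =
        ((1 : Matrix (Fin N) (Fin N) ℂ) ⊗ₖ B k₂) * Rmat N g (k₁ + k₂) *
          (B k₁ ⊗ₖ (1 : Matrix (Fin N) (Fin N) ℂ)) * Rmat N g (k₁ - k₂)) ↔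
    (∀ k₁ k₂ : ℝ, k₁ ≠ k₂ → k₁ ≠ -k₂ →
      B k₁ * B k₂ - B k₂ * B k₁ = 0 ∧
      (B k₁ * B k₂) ⊗ₖ (1 : Matrix (Fin N) (Fin N) ℂ)
          - (1 : Matrix (Fin N) (Fin N) ℂ) ⊗ₖ (B k₂ * B k₁) =
        (((k₁ + k₂) / (k₁ - k₂) : ℝ) : ℂ) •
          (B k₁ ⊗ₖ B k₂ - B k₂ ⊗ₖ B k₁)) := by
  have hYBE (k₁ k₂ : ℝ) := boundaryYBE_iff_reflectionDefect_eq_zero hg.ne' (B k₁) (B k₂) k₁ k₂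
  have hu {k₁ k₂ : ℝ} (h : k₁ ≠ k₂) : (k₁ : ℂ) - k₂ ≠ 0 :=
    sub_ne_zero.2 (Complex.ofReal_injective.ne h)
  constructor
  · intro H k₁ k₂ h₁ h₂
    have hD₁ := (hYBE k₁ k₂).1 (H k₁ k₂ h₁ h₂)
    have hD₂ := (hYBE k₂ k₁).1 (H k₂ k₁ h₁.symm fun h => h₂ (by linarith))
    rw [← neg_sub, add_comm] at hD₂
    have hC := commutator_eq_zero_of_reflectionDefect_eq_zero (hu h₁) hD₁ hD₂
    push_cast
    exact ⟨hC, (reflectionDefect_eq_zero_iff_of_commute (hu h₁) (sub_eq_zero.1 hC)).1 hD₁⟩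
  · intro H k₁ k₂ h₁ h₂
    obtain ⟨hC, hD⟩ := H k₁ k₂ h₁ h₂
    push_cast at hD
    exact (hYBE k₁ k₂).2
      ((reflectionDefect_eq_zero_iff_of_commute (hu h₁) (sub_eq_zero.1 hC)).2 hD)

/-- The boundary Yang–Baxter equation for `B : ℝ → M_N(ℂ)` is equivalent to the
commutativity condition together with the tensor identity (ii). -/
theorem boundary_YBE_iff (N : ℕ) (hN : 1 ≤ N) (g : ℝ) (hg : 0 < g)
    (B : ℝ → Matrix (Fin N) (Fin N) ℂ) :
    (∀ k₁ k₂ : ℝ, k₁ ≠ k₂ → k₁ ≠ -k₂ →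
      Rmat N g (k₁ - k₂) * (B k₁ ⊗ₖ (1 : Matrix (Fin N) (Fin N) ℂ)) *
          Rmat N g (k₁ + k₂) * ((1 : Matrix (Fin N) (Fin N) ℂ) ⊗ₖ B k₂) =
        ((1 : Matrix (Fin N) (Fin N) ℂ) ⊗ₖ B k₂) * Rmat N g (k₁ + k₂) *
          (B k₁ ⊗ₖ (1 : Matrix (Fin N) (Fin N) ℂ)) * Rmat N g (k₁ - k₂)) ↔
    (∀ k₁ k₂ : ℝ, k₁ ≠ k₂ → k₁ ≠ -k₂ →
      B k₁ * B k₂ - B k₂ * B k₁ = 0 ∧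
      (B k₁ * B k₂) ⊗ₖ (1 : Matrix (Fin N) (Fin N) ℂ)
          - (1 : Matrix (Fin N) (Fin N) ℂ) ⊗ₖ (B k₂ * B k₁) =
        (((k₁ + k₂) / (k₁ - k₂) : ℝ) : ℂ) •
          (B k₁ ⊗ₖ B k₂ - B k₂ ⊗ₖ B k₁)) :=
  boundary_YBE_iff_general N g hg B
end

section
/- Let E ∈ M_N(ℂ) with E² = I, let a ∈ ℝ, and let β : ℝ → ℂ be any function. Define B(k) = β(k)·(I + iak·E)/(1+iak) for real k (note 1+iak ≠ 0 for real a,k). Then B satisfies, for all real k₁ ≠ ±k₂: (i) [B(k₁),B(k₂)] = 0, and (ii) (B(k₁)B(k₂))⊗I − I⊗(B(k₂)B(k₁)) = ((k₁+k₂)/(k₁−k₂))·(B(k₁)⊗B(k₂) − B(k₂)⊗B(k₁)); consequently B satisfies the boundary Yang–Baxter equation R(k₁−k₂)B₁(k₁)R(k₁+k₂)B₂(k₂) = B₂(k₂)R(k₁+k₂)B₁(k₁)R(k₁−k₂) for the rational R-matrix. -/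
open Matrix Kronecker

/-- `P * P = 1`. -/
lemma flip_mul_flip (N : ℕ) : flipMat N * flipMat N = 1 := by
  ext ⟨i,j⟩ ⟨k,l⟩
  simp [flipMat, Matrix.mul_apply, Fintype.sum_prod_type, Matrix.one_apply, Prod.ext_iff,
    ite_and, and_comm]

/-- `(X ⊗ Y) P = P (Y ⊗ X)`. -/
lemma kron_mul_flip (N : ℕ) (X Y : Matrix (Fin N) (Fin N) ℂ) :
    (X ⊗ₖ Y) * flipMat N = flipMat N * (Y ⊗ₖ X) := by
  ext ⟨i,j⟩ ⟨k,l⟩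
  simp [flipMat, Matrix.mul_apply, Fintype.sum_prod_type, kroneckerMap_apply, ite_and,
    mul_comm]

lemma kron_mul_flip_assoc (N : ℕ) (X Y : Matrix (Fin N) (Fin N) ℂ)
    (M : Matrix (Fin N × Fin N) (Fin N × Fin N) ℂ) :
    (X ⊗ₖ Y) * (flipMat N * M) = flipMat N * ((Y ⊗ₖ X) * M) := by
  rw [← mul_assoc, kron_mul_flip, mul_assoc]

lemma flip_mul_flip_assoc (N : ℕ) (M : Matrix (Fin N × Fin N) (Fin N × Fin N) ℂ) :
    flipMat N * (flipMat N * M) = M := by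
  rw [← mul_assoc, flip_mul_flip, one_mul]

lemma kron_mul_kron_assoc (N : ℕ) (X Y Z W : Matrix (Fin N) (Fin N) ℂ)
    (M : Matrix (Fin N × Fin N) (Fin N × Fin N) ℂ) :
    (X ⊗ₖ Y) * ((Z ⊗ₖ W) * M) = ((X * Z) ⊗ₖ (Y * W)) * M := by
  rw [← mul_assoc, ← Matrix.mul_kronecker_mul]

/-- The reflection matrices `B(k) = β(k) (I + iakE)/(1 + iak)` with `E² = I`, `a` real,
satisfy the commutativity condition, the tensor identity and the boundary
Yang–Baxter equation. -/
theorem reflection_matrix_solves_boundary_YBE (N : ℕ) (hN : 1 ≤ N) (g : ℝ) (hg : 0 < g)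
    (E : Matrix (Fin N) (Fin N) ℂ) (hE : E * E = 1) (a : ℝ) (β : ℝ → ℂ)
    (B : ℝ → Matrix (Fin N) (Fin N) ℂ)
    (hB : ∀ k : ℝ, B k = (β k / (1 + Complex.I * (a : ℂ) * (k : ℂ))) •
      ((1 : Matrix (Fin N) (Fin N) ℂ) + (Complex.I * (a : ℂ) * (k : ℂ)) • E)) :
    ∀ k₁ k₂ : ℝ, k₁ ≠ k₂ → k₁ ≠ -k₂ →
      (B k₁ * B k₂ - B k₂ * B k₁ = 0) ∧
      ((B k₁ * B k₂) ⊗ₖ (1 : Matrix (Fin N) (Fin N) ℂ)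
          - (1 : Matrix (Fin N) (Fin N) ℂ) ⊗ₖ (B k₂ * B k₁) =
        (((k₁ + k₂) / (k₁ - k₂) : ℝ) : ℂ) • (B k₁ ⊗ₖ B k₂ - B k₂ ⊗ₖ B k₁)) ∧
      (Rmat N g (k₁ - k₂) * (B k₁ ⊗ₖ (1 : Matrix (Fin N) (Fin N) ℂ)) *
          Rmat N g (k₁ + k₂) * ((1 : Matrix (Fin N) (Fin N) ℂ) ⊗ₖ B k₂) =
        ((1 : Matrix (Fin N) (Fin N) ℂ) ⊗ₖ B k₂) * Rmat N g (k₁ + k₂) *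
          (B k₁ ⊗ₖ (1 : Matrix (Fin N) (Fin N) ℂ)) * Rmat N g (k₁ - k₂)) := by
  intro k₁ k₂ h12 h12'
  have hne : (k₁ : ℂ) - k₂ ≠ 0 := sub_ne_zero.mpr (by exact_mod_cast h12)
  have hB₁ := hB k₁
  have hB₂ := hB k₂
  set c₁ : ℂ := β k₁ / (1 + Complex.I * (a : ℂ) * (k₁ : ℂ)) with hc₁
  set c₂ : ℂ := β k₂ / (1 + Complex.I * (a : ℂ) * (k₂ : ℂ)) with hc₂
  refine ⟨?_, ?_, ?_⟩
  · simp only [hB₁, hB₂, smul_add, smul_smul, add_mul, mul_add, smul_mul_assoc, mul_smul_comm,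
      one_mul, mul_one, hE]
    match_scalars <;> ring
  · simp only [hB₁, hB₂, smul_add, smul_smul, add_mul, mul_add, smul_mul_assoc, mul_smul_comm,
      one_mul, mul_one, hE, Matrix.add_kronecker, Matrix.kronecker_add,
      Matrix.smul_kronecker, Matrix.kronecker_smul, Matrix.one_kronecker_one]
    push_cast
    match_scalars <;> (field_simp; try ring) <;> tauto
  · simp only [Rmat, hB₁, hB₂, smul_add, smul_smul, add_mul, mul_add, smul_mul_assoc,
      mul_smul_comm, one_mul, mul_one, mul_assoc, hE,
      Matrix.add_kronecker, Matrix.kronecker_add, Matrix.smul_kronecker, Matrix.kronecker_smul,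
      Matrix.one_kronecker_one, ← Matrix.mul_kronecker_mul,
      kron_mul_flip, kron_mul_flip_assoc, flip_mul_flip, flip_mul_flip_assoc,
      kron_mul_kron_assoc]
    push_cast
    match_scalars <;> ring
end

section
/- Under the S_R exchange relations, the trace of the matrix commutator of b(k₁) and b(k₂) vanishes: for all real k₁ ≠ ±k₂, Σ_{i,a} ( b_{ia}(k₁)b_{ai}(k₂) − b_{ia}(k₂)b_{ai}(k₁) ) = 0 in A. -/
open Matrix

private lemma key_sum {N : ℕ} {A : Type*} [Ring A] [Algebra ℂ A]
    (g : ℝ) (b : ℝ → Fin N → Fin N → A)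
    (hSR : ∀ k₁ k₂ : ℝ, k₁ ≠ k₂ → k₁ ≠ -k₂ → ∀ i j k l : Fin N,
      b k₁ i j * b k₂ k l - b k₂ k l * b k₁ i j =
        ((Complex.I * (g : ℂ)) / ((k₁ : ℂ) - (k₂ : ℂ))) •
            (b k₂ k j * b k₁ i l - b k₁ k j * b k₂ i l)
        + ((Complex.I * (g : ℂ)) / ((k₁ : ℂ) + (k₂ : ℂ))) •
            ((if i = l then ∑ a : Fin N, b k₂ k a * b k₁ a j else 0)
              - (if k = j then ∑ a : Fin N, b k₁ i a * b k₂ a l else 0))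
        - (((g : ℂ) ^ 2) / ((k₁ : ℂ) ^ 2 - (k₂ : ℂ) ^ 2)) •
            (if i = j then
              ∑ a : Fin N, (b k₂ k a * b k₁ a l - b k₁ k a * b k₂ a l)
             else 0))
    (p q : ℝ) (h1 : p ≠ q) (h2 : p ≠ -q) :
    (∑ i : Fin N, ∑ a : Fin N, b p i a * b q a i) -
      (∑ i : Fin N, ∑ a : Fin N, b q i a * b p a i) =
      ((Complex.I * (g : ℂ)) / ((p : ℂ) - (q : ℂ))) •
          ((∑ i : Fin N, b q i i) * (∑ i : Fin N, b p i i)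
            - (∑ i : Fin N, b p i i) * (∑ i : Fin N, b q i i))
      + ((N : ℂ) * ((Complex.I * (g : ℂ)) / ((p : ℂ) + (q : ℂ)))) •
          ((∑ i : Fin N, ∑ a : Fin N, b q i a * b p a i)
            - (∑ i : Fin N, ∑ a : Fin N, b p i a * b q a i))
      - (((g : ℂ) ^ 2) / ((p : ℂ) ^ 2 - (q : ℂ) ^ 2)) •
          ((∑ i : Fin N, ∑ a : Fin N, b q i a * b p a i)
            - (∑ i : Fin N, ∑ a : Fin N, b p i a * b q a i)) := by
  set c1 : ℂ := (Complex.I * (g : ℂ)) / ((p : ℂ) - (q : ℂ)) with hc1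
  set c2 : ℂ := (Complex.I * (g : ℂ)) / ((p : ℂ) + (q : ℂ)) with hc2
  set dd : ℂ := ((g : ℂ) ^ 2) / ((p : ℂ) ^ 2 - (q : ℂ) ^ 2) with hdd
  have step1 : (∑ i : Fin N, ∑ a : Fin N, b p i a * b q a i) -
      (∑ i : Fin N, ∑ a : Fin N, b q i a * b p a i) =
      ∑ i : Fin N, ∑ a : Fin N, (b p i a * b q a i - b q a i * b p i a) := by
    simp only [Finset.sum_sub_distrib]
    congr 1
    rw [Finset.sum_comm]
  rw [step1]
  rw [Finset.sum_congr rfl fun i _ => Finset.sum_congr rfl fun a _ =>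
    hSR p q h1 h2 i a a i]
  have split : ∑ i : Fin N, ∑ a : Fin N,
      (c1 • (b q a a * b p i i - b p a a * b q i i)
        + c2 • ((if i = i then ∑ x : Fin N, b q a x * b p x a else 0)
            - (if a = a then ∑ x : Fin N, b p i x * b q x i else 0))
        - dd • (if i = a then
            ∑ x : Fin N, (b q a x * b p x i - b p a x * b q x i) else 0)) =
      (∑ i : Fin N, ∑ a : Fin N, c1 • (b q a a * b p i i - b p a a * b q i i))
      + (∑ i : Fin N, ∑ a : Fin N,
          c2 • ((∑ x : Fin N, b q a x * b p x a) - (∑ x : Fin N, b p i x * b q x i)))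
      - (∑ i : Fin N, ∑ a : Fin N,
          dd • (if i = a then
            ∑ x : Fin N, (b q a x * b p x i - b p a x * b q x i) else 0)) := by
    simp only [eq_self_iff_true, if_true, Finset.sum_add_distrib, Finset.sum_sub_distrib]
  rw [split]
  have e1 : (∑ i : Fin N, ∑ a : Fin N, c1 • (b q a a * b p i i - b p a a * b q i i)) =
      c1 • ((∑ i : Fin N, b q i i) * (∑ i : Fin N, b p i i)
        - (∑ i : Fin N, b p i i) * (∑ i : Fin N, b q i i)) := by
    simp only [← Finset.smul_sum]
    congr 1
    simp only [Finset.sum_sub_distrib]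
    congr 1
    · rw [Finset.sum_comm, Finset.sum_mul_sum]
    · rw [Finset.sum_comm, Finset.sum_mul_sum]
  have e2 : (∑ i : Fin N, ∑ a : Fin N,
      c2 • ((∑ x : Fin N, b q a x * b p x a) - (∑ x : Fin N, b p i x * b q x i))) =
      ((N : ℂ) * c2) • ((∑ i : Fin N, ∑ a : Fin N, b q i a * b p a i)
        - (∑ i : Fin N, ∑ a : Fin N, b p i a * b q a i)) := by
    simp only [← Finset.smul_sum, Finset.sum_sub_distrib, Finset.sum_const,
      Finset.card_univ, Fintype.card_fin, smul_sub]
    rw [← Nat.cast_smul_eq_nsmul ℂ, ← Nat.cast_smul_eq_nsmul ℂ (M := A)]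
    rw [smul_comm c2, smul_comm c2, ← smul_sub, ← smul_sub, smul_smul, smul_sub]
  have e3 : (∑ i : Fin N, ∑ a : Fin N,
      dd • (if i = a then
        ∑ x : Fin N, (b q a x * b p x i - b p a x * b q x i) else 0)) =
      dd • ((∑ i : Fin N, ∑ a : Fin N, b q i a * b p a i)
        - (∑ i : Fin N, ∑ a : Fin N, b p i a * b q a i)) := by
    simp only [smul_ite, smul_zero, Finset.sum_ite_eq, Finset.mem_univ, if_true,
      ← Finset.smul_sum]
    congr 1
    simp only [Finset.sum_sub_distrib]
  rw [e1, e2, e3]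

/-- Under the S_R exchange relations, the trace of the matrix commutator
`[b(k₁), b(k₂)]` vanishes. -/
theorem trace_commutator_vanishes (N : ℕ) (hN : 1 ≤ N) (g : ℝ) (hg : 0 < g)
    (A : Type*) [Ring A] [Algebra ℂ A]
    (b : ℝ → Fin N → Fin N → A)
    (hSR : ∀ k₁ k₂ : ℝ, k₁ ≠ k₂ → k₁ ≠ -k₂ → ∀ i j k l : Fin N,
      b k₁ i j * b k₂ k l - b k₂ k l * b k₁ i j =
        ((Complex.I * (g : ℂ)) / ((k₁ : ℂ) - (k₂ : ℂ))) •
            (b k₂ k j * b k₁ i l - b k₁ k j * b k₂ i l)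
        + ((Complex.I * (g : ℂ)) / ((k₁ : ℂ) + (k₂ : ℂ))) •
            ((if i = l then ∑ a : Fin N, b k₂ k a * b k₁ a j else 0)
              - (if k = j then ∑ a : Fin N, b k₁ i a * b k₂ a l else 0))
        - (((g : ℂ) ^ 2) / ((k₁ : ℂ) ^ 2 - (k₂ : ℂ) ^ 2)) •
            (if i = j then
              ∑ a : Fin N, (b k₂ k a * b k₁ a l - b k₁ k a * b k₂ a l)
             else 0)) :
    ∀ k₁ k₂ : ℝ, k₁ ≠ k₂ → k₁ ≠ -k₂ →
      ∑ i : Fin N, ∑ a : Fin N,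
        (b k₁ i a * b k₂ a i - b k₂ i a * b k₁ a i) = 0 := by
  intro k₁ k₂ hne hne'
  have hne₂ : k₂ ≠ k₁ := Ne.symm hne
  have hne₂' : k₂ ≠ -k₁ := fun h => hne' (by linarith)
  have hd : (k₁ : ℝ) - k₂ ≠ 0 := sub_ne_zero_of_ne hne
  have hz : k₁ + k₂ ≠ 0 := fun h => hne' (by linarith)
  have E1 := key_sum g b hSR k₁ k₂ hne hne'
  have E2 := key_sum g b hSR k₂ k₁ hne₂ hne₂'
  set u := ∑ i : Fin N, ∑ a : Fin N, b k₁ i a * b k₂ a i with hu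
  set v := ∑ i : Fin N, ∑ a : Fin N, b k₂ i a * b k₁ a i with hv
  set t1 := ∑ i : Fin N, b k₁ i i with ht1
  set t2 := ∑ i : Fin N, b k₂ i i with ht2
  set c1 : ℂ := (Complex.I * (g : ℂ)) / ((k₁ : ℂ) - (k₂ : ℂ)) with hc1
  set c2 : ℂ := (Complex.I * (g : ℂ)) / ((k₁ : ℂ) + (k₂ : ℂ)) with hc2
  set dd : ℂ := ((g : ℂ) ^ 2) / ((k₁ : ℂ) ^ 2 - (k₂ : ℂ) ^ 2) with hdd
  -- normalize the scalars appearing in E2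
  have s1 : (Complex.I * (g : ℂ)) / ((k₂ : ℂ) - (k₁ : ℂ)) = -c1 := by
    rw [hc1, show ((k₂ : ℂ) - (k₁ : ℂ)) = -(((k₁ : ℂ) - (k₂ : ℂ))) by ring, div_neg]
  have s2 : (Complex.I * (g : ℂ)) / ((k₂ : ℂ) + (k₁ : ℂ)) = c2 := by
    rw [hc2, add_comm ((k₂ : ℂ))]
  have s3 : ((g : ℂ) ^ 2) / ((k₂ : ℂ) ^ 2 - (k₁ : ℂ) ^ 2) = -dd := by
    rw [hdd, show ((k₂ : ℂ) ^ 2 - (k₁ : ℂ) ^ 2) = -(((k₁ : ℂ) ^ 2 - (k₂ : ℂ) ^ 2)) by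
      ring, div_neg]
  rw [s1, s2, s3] at E2
  have z1 := sub_eq_zero_of_eq E1
  have z2 := sub_eq_zero_of_eq E2
  have hcomb : (2 + 2 * (N : ℂ) * c2) • (u - v) =
      ((u - v) - (c1 • (t2 * t1 - t1 * t2) + ((N : ℂ) * c2) • (v - u) - dd • (v - u)))
      - ((v - u) - ((-c1) • (t1 * t2 - t2 * t1) + ((N : ℂ) * c2) • (u - v)
          - (-dd) • (u - v))) := by
    module
  rw [z1, z2, sub_zero] at hcomb
  have hzc : ((k₁ : ℂ) + (k₂ : ℂ)) ≠ 0 := by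
    rw [← Complex.ofReal_add]
    exact_mod_cast Complex.ofReal_ne_zero.mpr hz
  have hs : (1 + (N : ℂ) * c2) ≠ 0 := by
    rw [hc2]
    intro h
    have h2 : ((k₁ : ℂ) + k₂) + (N : ℂ) * (Complex.I * (g : ℂ)) = 0 := by
      field_simp at h
      linear_combination h
    have h3 := congrArg Complex.im h2
    simp [Complex.add_im, Complex.mul_im] at h3
    have hN' : (1 : ℝ) ≤ (N : ℝ) := by exact_mod_cast hN
    rcases h3 with h3 | h3 <;> nlinarith
  have hs2 : (2 + 2 * (N : ℂ) * c2) ≠ 0 := by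
    rw [show (2 + 2 * (N : ℂ) * c2) = 2 * (1 + (N : ℂ) * c2) by ring]
    exact mul_ne_zero two_ne_zero hs
  have hgoal : u - v = 0 := by
    have : u - v = ((2 + 2 * (N : ℂ) * c2)⁻¹ * (2 + 2 * (N : ℂ) * c2)) • (u - v) := by
      rw [inv_mul_cancel₀ hs2, one_smul]
    rw [this, mul_smul, hcomb, smul_zero]
  simpa only [Finset.sum_sub_distrib] using hgoal
end

section
/- Under the S_R exchange relations, the traces t(k) = Σ_i b_{ii}(k) form a commutative family: for all real k₁ ≠ ±k₂, [t(k₁), t(k₂)] = 0 in A. -/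
/-!
Write `X = [t(k₁), t(k₂)]` and `W = tr(b(k₂) b(k₁)) - tr(b(k₁) b(k₂))`, and abbreviate the
coefficients of the exchange relation as `c = ig/(k₁-k₂)`, `c' = ig/(k₁+k₂)`,
`e = g²/(k₁²-k₂²)`. Contracting the relation with `i = j, k = l` gives `X = (c + c' - N e) W`;
contracting it with `j = k, i = l` gives `(1 + N c' - e) W = c X`. Hence `δ W = 0` with
`δ = 1 + N c' - e - c (c + c' - N e) = (1 + g²/(k₁-k₂)²) (1 + iNg/(k₁+k₂))`, which is nonzero
because `g` and the `kᵢ` are real. So `W = 0`, and then `X = 0`.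
-/

open Matrix

theorem Matrix.sum_sum_mul_eq_trace_mul {ι α : Type*} [Fintype ι] [NonUnitalNonAssocSemiring α]
    (B C : Matrix ι ι α) : ∑ i, ∑ j, B j i * C i j = (B * C).trace := by
  simp only [trace, diag, mul_apply]
  exact Finset.sum_comm

section

variable {ι R A : Type*} [Fintype ι] [DecidableEq ι] [CommRing R] [Ring A] [Module R A]

def ExchangeRelation (c c' e : R) (B₁ B₂ : Matrix ι ι A) : Prop :=
  ∀ i j k l, B₁ i j * B₂ k l - B₂ k l * B₁ i j =
    c • (B₂ k j * B₁ i l - B₁ k j * B₂ i l)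
      + c' • ((if i = l then (B₂ * B₁) k j else 0) - (if k = j then (B₁ * B₂) i l else 0))
      - e • (if i = j then (B₂ * B₁) k l - (B₁ * B₂) k l else 0)

namespace ExchangeRelation

variable {c c' e : R} {B₁ B₂ : Matrix ι ι A}

theorem trace_mul_sub_trace_mul (h : ExchangeRelation c c' e B₁ B₂) :
    B₁.trace * B₂.trace - B₂.trace * B₁.trace =
      (c + c' - Fintype.card ι * e) • ((B₂ * B₁).trace - (B₁ * B₂).trace) := by
  have hsum := Finset.sum_congr rfl fun m (_ : m ∈ Finset.univ) =>
    Finset.sum_congr rfl fun n (_ : n ∈ Finset.univ) => h m m n n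
  simp only [Finset.sum_add_distrib, Finset.sum_sub_distrib, ← Finset.smul_sum, if_true,
    Finset.sum_ite_eq, Finset.sum_ite_eq', Finset.mem_univ, Finset.sum_const, Finset.card_univ,
    ← Finset.sum_mul, ← Finset.mul_sum, sum_sum_mul_eq_trace_mul,
    show ∀ M : Matrix ι ι A, ∑ i, M i i = M.trace from fun _ => rfl] at hsum
  rw [hsum]
  module

theorem trace_mul_trace_sub (h : ExchangeRelation c c' e B₁ B₂) :
    (B₁ * B₂).trace - (B₂ * B₁).trace =
      c • (B₂.trace * B₁.trace - B₁.trace * B₂.trace)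
        + (Fintype.card ι * c' - e) • ((B₂ * B₁).trace - (B₁ * B₂).trace) := by
  have hsum := Finset.sum_congr rfl fun m (_ : m ∈ Finset.univ) =>
    Finset.sum_congr rfl fun n (_ : n ∈ Finset.univ) => h n m m n
  simp only [Finset.sum_add_distrib, Finset.sum_sub_distrib, ← Finset.smul_sum, if_true,
    Finset.sum_ite_eq', Finset.mem_univ, Finset.sum_const, Finset.card_univ,
    ← Finset.sum_mul, ← Finset.mul_sum, ← mul_apply, sum_sum_mul_eq_trace_mul,
    show ∀ M : Matrix ι ι A, ∑ i, M i i = M.trace from fun _ => rfl] at hsum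
  rw [hsum]
  module

theorem commute_trace {K : Type*} [Field K] [Module K A] {c c' e : K}
    (h : ExchangeRelation c c' e B₁ B₂)
    (hδ : 1 + Fintype.card ι * c' - e - c * (c + c' - Fintype.card ι * e) ≠ 0) :
    Commute B₁.trace B₂.trace := by
  have h₁ := h.trace_mul_sub_trace_mul
  have hW : (B₂ * B₁).trace - (B₁ * B₂).trace = 0 := by
    refine (smul_eq_zero.mp ?_).resolve_left hδ
    linear_combination (norm := module) -h.trace_mul_trace_sub + c • h₁
  exact sub_eq_zero.mp (h₁.trans (by rw [hW, smul_zero]))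

end ExchangeRelation

end

open Complex in
theorem exchange_contraction_coeff_ne_zero (n g u v : ℝ) :
    (1 : ℂ) + n * (I * g / v) - g ^ 2 / (v * u)
      - I * g / u * (I * g / u + I * g / v - n * (g ^ 2 / (v * u))) ≠ 0 := by
  have hfactor : (1 : ℂ) + n * (I * g / v) - g ^ 2 / (v * u)
      - I * g / u * (I * g / u + I * g / v - n * (g ^ 2 / (v * u)))
      = ((1 + (g / u) ^ 2 : ℝ) : ℂ) * (1 + ((n * g / v : ℝ) : ℂ) * I) := by
    push_cast
    linear_combination (-(g : ℂ) ^ 2 * (1 / (v * u) + 1 / u ^ 2)) * I_sq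
  rw [hfactor]
  refine mul_ne_zero (ofReal_ne_zero.mpr (by positivity)) fun h => ?_
  simpa using congrArg re h

theorem traces_commute_general (N : ℕ) (g : ℝ)
    (A : Type*) [Ring A] [Algebra ℂ A]
    (b : ℝ → Fin N → Fin N → A)
    (hSR : ∀ k₁ k₂ : ℝ, k₁ ≠ k₂ → k₁ ≠ -k₂ → ∀ i j k l : Fin N,
      b k₁ i j * b k₂ k l - b k₂ k l * b k₁ i j =
        ((Complex.I * (g : ℂ)) / ((k₁ : ℂ) - (k₂ : ℂ))) •
            (b k₂ k j * b k₁ i l - b k₁ k j * b k₂ i l)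
        + ((Complex.I * (g : ℂ)) / ((k₁ : ℂ) + (k₂ : ℂ))) •
            ((if i = l then ∑ a : Fin N, b k₂ k a * b k₁ a j else 0)
              - (if k = j then ∑ a : Fin N, b k₁ i a * b k₂ a l else 0))
        - (((g : ℂ) ^ 2) / ((k₁ : ℂ) ^ 2 - (k₂ : ℂ) ^ 2)) •
            (if i = j then
              ∑ a : Fin N, (b k₂ k a * b k₁ a l - b k₁ k a * b k₂ a l)
             else 0)) :
    ∀ k₁ k₂ : ℝ, k₁ ≠ k₂ → k₁ ≠ -k₂ →
      (∑ m : Fin N, b k₁ m m) * (∑ m : Fin N, b k₂ m m) -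
        (∑ m : Fin N, b k₂ m m) * (∑ m : Fin N, b k₁ m m) = 0 := by
  intro k₁ k₂ hne hne'
  have hrel : ExchangeRelation (Complex.I * g / (k₁ - k₂)) (Complex.I * g / (k₁ + k₂))
      (g ^ 2 / (k₁ ^ 2 - k₂ ^ 2)) (of (b k₁)) (of (b k₂)) := fun i j k l => by
    simpa only [mul_apply, of_apply, Finset.sum_sub_distrib] using hSR k₁ k₂ hne hne' i j k l
  refine sub_eq_zero.mpr (hrel.commute_trace ?_).eq
  rw [Fintype.card_fin, sq_sub_sq]
  exact_mod_cast exchange_contraction_coeff_ne_zero N g (k₁ - k₂) (k₁ + k₂)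

/-- Under the S_R exchange relations, the traces `t(k) = Σ_i b_{ii}(k)` form a
commutative family: `[t(k₁), t(k₂)] = 0`. -/
theorem traces_commute (N : ℕ) (hN : 1 ≤ N) (g : ℝ) (hg : 0 < g)
    (A : Type*) [Ring A] [Algebra ℂ A]
    (b : ℝ → Fin N → Fin N → A)
    (hSR : ∀ k₁ k₂ : ℝ, k₁ ≠ k₂ → k₁ ≠ -k₂ → ∀ i j k l : Fin N,
      b k₁ i j * b k₂ k l - b k₂ k l * b k₁ i j =
        ((Complex.I * (g : ℂ)) / ((k₁ : ℂ) - (k₂ : ℂ))) •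
            (b k₂ k j * b k₁ i l - b k₁ k j * b k₂ i l)
        + ((Complex.I * (g : ℂ)) / ((k₁ : ℂ) + (k₂ : ℂ))) •
            ((if i = l then ∑ a : Fin N, b k₂ k a * b k₁ a j else 0)
              - (if k = j then ∑ a : Fin N, b k₁ i a * b k₂ a l else 0))
        - (((g : ℂ) ^ 2) / ((k₁ : ℂ) ^ 2 - (k₂ : ℂ) ^ 2)) •
            (if i = j then
              ∑ a : Fin N, (b k₂ k a * b k₁ a l - b k₁ k a * b k₂ a l)
             else 0)) :
    ∀ k₁ k₂ : ℝ, k₁ ≠ k₂ → k₁ ≠ -k₂ →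
      (∑ m : Fin N, b k₁ m m) * (∑ m : Fin N, b k₂ m m) -
        (∑ m : Fin N, b k₂ m m) * (∑ m : Fin N, b k₁ m m) = 0 :=
  traces_commute_general N g A b hSR
end

section
/- Assume the coefficient form of the S_R exchange relations, and assume b^{(0)} is the diagonal matrix with diagonal entries ε_i ∈ {+1,−1}, i.e. b^{(0)}_{ij} = ε_i δ_{ij} (times the unit of A). Then for all n ≥ 0 and all indices i,j,k,l: [b^{(1)}_{ij}, b^{(n)}_{kl}] = ig·(ε_i + ε_j)·( δ_{il} b^{(n)}_{kj} − δ_{kj} b^{(n)}_{il} ). -/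
open Matrix

/-- Under the coefficient form of the S_R exchange relations, if `b⁰ = diag(ε)` with
`ε_i = ±1`, then `[b¹_{ij}, bⁿ_{kl}] = ig (ε_i + ε_j)(δ_{il} bⁿ_{kj} − δ_{kj} bⁿ_{il})`. -/
theorem lie_subalgebra_commutation (N : ℕ) (hN : 1 ≤ N) (g : ℝ) (hg : 0 < g)
    (A : Type*) [Ring A] [Algebra ℂ A]
    (b : ℕ → Fin N → Fin N → A)
    (hSR : ∀ m n : ℕ, ∀ i j k l : Fin N,
      b m i j * b n k l - b n k l * b m i j =
        (Complex.I * (g : ℂ)) •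
          (∑ r ∈ Finset.range m,
            ((b (n + r) k j * b (m - 1 - r) i l - b (m - 1 - r) k j * b (n + r) i l)
              + ((-1 : ℂ) ^ r) •
                  ((if i = l then ∑ a : Fin N, b (n + r) k a * b (m - 1 - r) a j else 0)
                    - (if k = j then ∑ a : Fin N, b (m - 1 - r) i a * b (n + r) a l else 0))))
        - ((g : ℂ) ^ 2) •
            (if i = j then
              ∑ r ∈ Finset.range (m / 2), ∑ a : Fin N,
                (b (n + 2 * r) k a * b (m - 2 - 2 * r) a l
                  - b (m - 2 - 2 * r) k a * b (n + 2 * r) a l)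
             else 0))
    (ε : Fin N → ℂ) (hε : ∀ i : Fin N, ε i = 1 ∨ ε i = -1)
    (hb0 : ∀ i j : Fin N, b 0 i j = algebraMap ℂ A (if i = j then ε i else 0)) :
    ∀ n : ℕ, ∀ i j k l : Fin N,
      b 1 i j * b n k l - b n k l * b 1 i j =
        (Complex.I * (g : ℂ) * (ε i + ε j)) •
          ((if i = l then b n k j else 0) - (if k = j then b n i l else 0)) := by

  intro n i j k l
  have hmul : ∀ (x : A) (c : ℂ), x * algebraMap ℂ A c = c • x := by
    intro x c
    rw [← Algebra.commutes, ← Algebra.smul_def]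
  have hmul' : ∀ (x : A) (c : ℂ), algebraMap ℂ A c * x = c • x := by
    intro x c
    rw [← Algebra.smul_def]
  have hsum1 : ∀ p q : Fin N, ∑ a : Fin N, b n p a * b 0 a q = ε q • b n p q := by
    intro p q
    have : ∀ a : Fin N, b n p a * b 0 a q = if a = q then ε q • b n p q else 0 := by
      intro a
      rw [hb0, hmul]
      by_cases ha : a = q
      · subst ha; simp
      · simp [ha]
    simp [this]
  have hsum2 : ∀ p q : Fin N, ∑ a : Fin N, b 0 p a * b n a q = ε p • b n p q := by
    intro p q
    have : ∀ a : Fin N, b 0 p a * b n a q = if p = a then ε p • b n p q else 0 := by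
      intro a
      rw [hb0, hmul']
      by_cases ha : p = a
      · subst ha; simp
      · simp [ha]
    simp [this]
  have h := hSR 1 n i j k l
  simp only [Finset.range_one, Finset.sum_singleton, pow_zero, one_smul, Nat.add_zero,
    show (1:ℕ)/2 = 0 from rfl, show (1:ℕ) - 1 - 0 = 0 from rfl,
    Finset.range_zero, Finset.sum_empty, ite_self, smul_zero, sub_zero,
    hsum1, hsum2] at h
  rw [hb0 i l, hb0 k j, hmul, hmul'] at h
  rw [h]
  by_cases hil : i = l <;> by_cases hkj : k = j
  · subst hil; subst hkj
    simp only [eq_self_iff_true, if_true]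
    module
  · subst hil
    simp only [eq_self_iff_true, if_true, if_neg hkj, zero_smul, smul_zero, sub_zero]
    module
  · subst hkj
    simp only [eq_self_iff_true, if_true, if_neg hil, zero_smul, smul_zero, zero_sub,
      zero_add]
    module
  · simp only [if_neg hil, if_neg hkj, zero_smul, smul_zero, sub_zero, sub_self, zero_add]
end
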